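/- arXiv:math/0301222 — 8 statements merged into one kernel-verified Lean document; each statement's English description precedes it below -/
import Mathlib

section
/- Let A be a finite nonempty set of exponents in ℤ^d and let a : A → ℂ with a_m ≠ 0 for every m ∈ A. Suppose x ∈ ℝ^d satisfies ⟨m, x⟩ + log|a_m| ≤ −log(|A| + 1) for every m ∈ A, where |A| is the cardinality of A. Then for every z ∈ (ℂ \ {0})^d with log|z_i| = x_i for all i, one has ∑_{m ∈ A} a_m z^m ≠ 1. (In the paper's notation: the amoeba of the hypersurface ∑_{m ∈ Δ_ℤ \ {0}} a_m z^m = 1 is disjoint from the polytope Δ^∨_{λ−c} with λ = log|a| and c = log|Δ_ℤ|.) -/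
/-! Each monomial satisfies `‖a_m z^m‖ ≤ exp(log‖a_m‖ + ⟨m, x⟩) ≤ 1 / (|A| + 1)`, so by the
triangle inequality the sum has norm at most `|A| / (|A| + 1) < 1`. -/

open Finset

lemma Real.zpow_le_exp_mul_log {r : ℝ} (hr : 0 ≤ r) (k : ℤ) :
    r ^ k ≤ Real.exp (k * Real.log r) := by
  rcases hr.eq_or_lt with rfl | hr
  · rcases eq_or_ne k 0 with rfl | hk
    · simp
    · rw [zero_zpow _ hk]; exact (Real.exp_pos _).le
  · rw [← Real.log_zpow, Real.exp_log (zpow_pos hr k)]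

lemma norm_mul_prod_zpow_le_exp {ι : Type*} [Fintype ι] (c : ℂ) (z : ι → ℂ) (m : ι → ℤ) :
    ‖c * ∏ i, z i ^ m i‖ ≤ Real.exp (Real.log ‖c‖ + ∑ i, (m i : ℝ) * Real.log ‖z i‖) := by
  rw [norm_mul, norm_prod, Real.exp_add, Real.exp_sum]
  simp only [norm_zpow]
  gcongr with i
  · exact Real.le_exp_log _
  · exact Real.zpow_le_exp_mul_log (norm_nonneg _) _

lemma norm_sum_lt_one_of_forall_norm_le {ι E : Type*} [SeminormedAddCommGroup E]
    (s : Finset ι) (f : ι → E) (hf : ∀ i ∈ s, ‖f i‖ ≤ 1 / (#s + 1)) :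
    ‖∑ i ∈ s, f i‖ < 1 := by
  have hpos : (0 : ℝ) < #s + 1 := by positivity
  calc ‖∑ i ∈ s, f i‖
      ≤ ∑ i ∈ s, ‖f i‖ := norm_sum_le _ _
    _ ≤ ∑ _i ∈ s, 1 / ((#s : ℝ) + 1) := sum_le_sum hf
    _ = #s / (#s + 1) := by rw [sum_const, nsmul_eq_mul, mul_one_div]
    _ < 1 := by rw [div_lt_one hpos]; linarith

theorem stmt_0_general (d : ℕ) (A : Finset (Fin d → ℤ))
    (a : (Fin d → ℤ) → ℂ)
    (x : Fin d → ℝ)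
    (hx : ∀ m ∈ A, (∑ i, (m i : ℝ) * x i) + Real.log ‖a m‖
      ≤ - Real.log ((A.card : ℝ) + 1))
    (z : Fin d → ℂ)
    (hzx : ∀ i, Real.log ‖z i‖ = x i) :
    ∑ m ∈ A, a m * ∏ i, z i ^ m i ≠ 1 := by
  intro h
  have hterm : ∀ m ∈ A, ‖a m * ∏ i, z i ^ m i‖ ≤ 1 / (#A + 1) := fun m hm =>
    calc ‖a m * ∏ i, z i ^ m i‖
        ≤ Real.exp (Real.log ‖a m‖ + ∑ i, (m i : ℝ) * x i) := by
          simpa only [hzx] using norm_mul_prod_zpow_le_exp (a m) z m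
      _ ≤ Real.exp (-Real.log (#A + 1)) := Real.exp_le_exp.mpr (by linarith [hx m hm])
      _ = 1 / (#A + 1) := by rw [Real.exp_neg, Real.exp_log (by positivity), one_div]
  simpa [h] using norm_sum_lt_one_of_forall_norm_le A _ hterm

/-- The amoeba of the hypersurface `∑_{m ∈ Δ_ℤ \ {0}} a_m z^m = 1` is disjoint from the
polytope `Δ^∨_{λ−c}` with `λ = log|a|` and `c = log|Δ_ℤ|`: if
`⟨m, x⟩ + log|a_m| ≤ −log(|A| + 1)` for all exponents `m`, then no `z` with `log|z| = x`
satisfies the equation. -/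
theorem stmt_0 (d : ℕ) (A : Finset (Fin d → ℤ)) (hA : A.Nonempty)
    (a : (Fin d → ℤ) → ℂ) (ha : ∀ m ∈ A, a m ≠ 0)
    (x : Fin d → ℝ)
    (hx : ∀ m ∈ A, (∑ i, (m i : ℝ) * x i) + Real.log ‖a m‖
      ≤ - Real.log ((A.card : ℝ) + 1))
    (z : Fin d → ℂ) (hz : ∀ i, z i ≠ 0)
    (hzx : ∀ i, Real.log ‖z i‖ = x i) :
    ∑ m ∈ A, a m * ∏ i, z i ^ m i ≠ 1 :=
  stmt_0_general d A a x hx z hzx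
end

section
/- Let ι be a nonempty finite index set, c : ι → ℂ, v ∈ ι, and ε ≥ 0 with (|ι| − 1)·ε ≤ 1/2, where |ι| is the cardinality of ι. Suppose ∑_{i ∈ ι} c_i = 1 and |c_i| ≤ ε·|c_v| for every i ≠ v. Then c_v ≠ 0 and the principal complex logarithm satisfies |log c_v| ≤ 2(|ι| − 1)·ε; in particular |log|c_v|| ≤ 2(|ι| − 1)·ε and |arg c_v| ≤ 2(|ι| − 1)·ε. -/
/-!
The `c i` with `i ≠ v` sum to `1 - c v`, so `‖1 - c v‖ ≤ δ ‖c v‖` with `δ = (|ι| - 1) ε ≤ 1/2`,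
i.e. `‖(c v)⁻¹ - 1‖ ≤ δ`. Passing to the inverse is what makes the constant work:
`log (c v) = -log (c v)⁻¹`, and `‖log (1 + u)‖ ≤ 3/2 ‖u‖` for `‖u‖ ≤ 1/2`.
-/

theorem norm_sum_sub_le_of_forall_ne {ι E : Type*} [Fintype ι] [SeminormedAddCommGroup E]
    (f : ι → E) (v : ι) {B : ℝ} (h : ∀ i, i ≠ v → ‖f i‖ ≤ B) :
    ‖∑ i, f i - f v‖ ≤ ((Fintype.card ι : ℝ) - 1) * B := by
  classical
  rw [← Finset.sum_erase_eq_sub (Finset.mem_univ v)]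
  calc ‖∑ i ∈ Finset.univ.erase v, f i‖ ≤ ∑ _i ∈ Finset.univ.erase v, B :=
        norm_sum_le_of_le _ fun i hi => h i (Finset.ne_of_mem_erase hi)
    _ = ((Fintype.card ι : ℝ) - 1) * B := by
        rw [Finset.sum_const, Finset.card_erase_of_mem (Finset.mem_univ v), Finset.card_univ,
          nsmul_eq_mul, Nat.cast_sub (Fintype.card_pos_iff.mpr ⟨v⟩), Nat.cast_one]

namespace Complex

theorem norm_log_le_of_norm_inv_sub_one_le {z : ℂ} (h : ‖z⁻¹ - 1‖ ≤ 1 / 2) :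
    ‖log z‖ ≤ 3 / 2 * ‖z⁻¹ - 1‖ := by
  have hre : 0 < z⁻¹.re := by
    have := (abs_re_le_norm (z⁻¹ - 1)).trans h
    rw [sub_re, one_re, abs_le] at this
    linarith
  have harg : z⁻¹.arg ≠ Real.pi := fun hπ => by
    linarith [(arg_eq_pi_iff.mp hπ).1]
  have hlog : log z = -log z⁻¹ := by
    rw [← log_inv _ harg, inv_inv]
  simpa [hlog] using norm_log_one_add_half_le_self h

theorem norm_inv_sub_one_le_of_norm_one_sub_le {z : ℂ} {δ : ℝ} (hz : z ≠ 0)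
    (h : ‖1 - z‖ ≤ δ * ‖z‖) : ‖z⁻¹ - 1‖ ≤ δ := by
  rwa [show z⁻¹ - 1 = (1 - z) / z by field_simp, norm_div, div_le_iff₀ (norm_pos_iff.mpr hz)]

theorem norm_log_le_of_norm_one_sub_le {z : ℂ} {δ : ℝ} (hδ : δ ≤ 1 / 2)
    (h : ‖1 - z‖ ≤ δ * ‖z‖) : z ≠ 0 ∧ ‖log z‖ ≤ 3 / 2 * δ := by
  have hz : z ≠ 0 := by
    rintro rfl
    norm_num at h
  have hinv := norm_inv_sub_one_le_of_norm_one_sub_le hz h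
  exact ⟨hz, (norm_log_le_of_norm_inv_sub_one_le (hinv.trans hδ)).trans (by linarith)⟩

end Complex

theorem stmt_1_general (ι : Type*) [Fintype ι] (c : ι → ℂ) (v : ι)
    (ε : ℝ) (hε : 0 ≤ ε) (hcard : ((Fintype.card ι : ℝ) - 1) * ε ≤ 1 / 2)
    (hsum : ∑ i, c i = 1)
    (hbound : ∀ i, i ≠ v → ‖c i‖ ≤ ε * ‖c v‖) :
    c v ≠ 0 ∧
      ‖Complex.log (c v)‖ ≤ 2 * ((Fintype.card ι : ℝ) - 1) * ε ∧
      |Real.log ‖c v‖| ≤ 2 * ((Fintype.card ι : ℝ) - 1) * ε ∧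
      |Complex.arg (c v)| ≤ 2 * ((Fintype.card ι : ℝ) - 1) * ε := by
  have hclose : ‖1 - c v‖ ≤ ((Fintype.card ι : ℝ) - 1) * ε * ‖c v‖ := by
    simpa [hsum, mul_assoc] using norm_sum_sub_le_of_forall_ne c v hbound
  obtain ⟨hne, hlog⟩ := Complex.norm_log_le_of_norm_one_sub_le hcard hclose
  have hδ : 0 ≤ ((Fintype.card ι : ℝ) - 1) * ε :=
    mul_nonneg (sub_nonneg.mpr (by exact_mod_cast Fintype.card_pos_iff.mpr ⟨v⟩)) hε
  have hlog' : ‖Complex.log (c v)‖ ≤ 2 * ((Fintype.card ι : ℝ) - 1) * ε := by linarith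
  refine ⟨hne, hlog', ?_, ?_⟩
  · rw [← Complex.log_re]
    exact (Complex.abs_re_le_norm _).trans hlog'
  · rw [← Complex.log_im]
    exact (Complex.abs_im_le_norm _).trans hlog'

/-- If `∑ c_i = 1` and all terms except `c_v` are small compared to `c_v`
(`|c_i| ≤ ε |c_v|` with `(|ι|−1)ε ≤ 1/2`), then `c_v ≠ 0` and the principal logarithm
of `c_v` is small: `|log c_v| ≤ 2(|ι|−1)ε`; in particular both `|log |c_v||` and
`|arg c_v|` are bounded by `2(|ι|−1)ε`. -/
theorem stmt_1 (ι : Type*) [Fintype ι] [Nonempty ι] (c : ι → ℂ) (v : ι)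
    (ε : ℝ) (hε : 0 ≤ ε) (hcard : ((Fintype.card ι : ℝ) - 1) * ε ≤ 1 / 2)
    (hsum : ∑ i, c i = 1)
    (hbound : ∀ i, i ≠ v → ‖c i‖ ≤ ε * ‖c v‖) :
    c v ≠ 0 ∧
      ‖Complex.log (c v)‖ ≤ 2 * ((Fintype.card ι : ℝ) - 1) * ε ∧
      |Real.log ‖c v‖| ≤ 2 * ((Fintype.card ι : ℝ) - 1) * ε ∧
      |Complex.arg (c v)| ≤ 2 * ((Fintype.card ι : ℝ) - 1) * ε :=
  stmt_1_general ι c v ε hε hcard hsum hbound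
end

section
/- Let A be a finite set of exponents in ℤ^d, v ∈ A, and a : A → ℂ with a_m ≠ 0 for all m ∈ A. Let β > 0 satisfy (|A| − 1)·e^{−β} ≤ 1/2, where |A| is the cardinality of A. Suppose z ∈ (ℂ \ {0})^d satisfies ∑_{m ∈ A} a_m z^m = 1, and the point x ∈ ℝ^d with x_i = log|z_i| satisfies ⟨m, x⟩ + log|a_m| ≤ ⟨v, x⟩ + log|a_v| − β for every m ∈ A with m ≠ v. Then |⟨v, x⟩ + log|a_v|| ≤ 2(|A| − 1)·e^{−β} and |arg(a_v z^v)| ≤ 2(|A| − 1)·e^{−β}. (This is the paper's Lemma on points of Z_a lying over the chart U_v^β: both |⟨v, log|z|⟩ + λ(v)| and |⟨v, Arg(z)⟩ + θ_v| are bounded by C(β)e^{−β}.) -/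
/-!
Put `w_m = a_m z^m`. Since `∑ w_m = 1` and every `w_m` with `m ≠ v` is at most `e^{-β} |w_v|`,
`|1 - w_v| ≤ ε |w_v|` with `ε = (|A| - 1) e^{-β} ≤ 1/2`. Such a `w_v` is close to `1`
multiplicatively: `|log |w_v|| ≤ 2ε`, and `w_v` lies in the right half-plane with
`|sin arg w_v| ≤ ε`, so Jordan's inequality gives `|arg w_v| ≤ (π/2) ε ≤ 2ε`.
Finally `log |w_v| = ⟨v, x⟩ + log |a_v|`.
-/

theorem Complex.log_norm_mul_prod_zpow {ι : Type*} [Fintype ι] {a : ℂ} (ha : a ≠ 0) {z : ι → ℂ}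
    (hz : ∀ i, z i ≠ 0) (m : ι → ℤ) :
    Real.log ‖a * ∏ i, z i ^ m i‖ = ∑ i, (m i : ℝ) * Real.log ‖z i‖ + Real.log ‖a‖ := by
  have hzm : ∀ i, ‖z i ^ m i‖ ≠ 0 := fun i => norm_ne_zero_iff.mpr (zpow_ne_zero _ (hz i))
  rw [norm_mul, Complex.norm_prod, Real.log_mul (norm_ne_zero_iff.mpr ha)
    (Finset.prod_ne_zero_iff.mpr fun i _ => hzm i), add_comm,
    Real.log_prod fun i _ => hzm i]
  simp only [norm_zpow, Real.log_zpow]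

theorem norm_one_sub_le_of_sum_eq_one {α : Type*} [DecidableEq α] {A : Finset α} {v : α}
    (hv : v ∈ A) {w : α → ℂ} (hsum : ∑ m ∈ A, w m = 1) {δ : ℝ}
    (hdom : ∀ m ∈ A, m ≠ v → ‖w m‖ ≤ δ * ‖w v‖) :
    ‖1 - w v‖ ≤ ((A.card : ℝ) - 1) * δ * ‖w v‖ := by
  have hrest : 1 - w v = ∑ m ∈ A.erase v, w m := by
    rw [← hsum, ← Finset.sum_erase_add A w hv, add_sub_cancel_right]
  calc ‖1 - w v‖ ≤ ∑ m ∈ A.erase v, ‖w m‖ := hrest ▸ norm_sum_le _ _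
    _ ≤ ∑ _m ∈ A.erase v, δ * ‖w v‖ := Finset.sum_le_sum fun m hm =>
          hdom m (Finset.mem_of_mem_erase hm) (Finset.ne_of_mem_erase hm)
    _ = ((A.card : ℝ) - 1) * δ * ‖w v‖ := by
          rw [Finset.sum_const, nsmul_eq_mul, Finset.card_erase_of_mem hv,
            Nat.cast_sub (Finset.card_pos.mpr ⟨v, hv⟩), Nat.cast_one, mul_assoc]

section NearOne

variable {w : ℂ} {ε : ℝ}

theorem Complex.norm_pos_of_norm_one_sub_le (h : ‖1 - w‖ ≤ ε * ‖w‖) : 0 < ‖w‖ := by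
  refine norm_pos_iff.mpr fun hw => ?_
  rw [hw, norm_zero, mul_zero, sub_zero, norm_one] at h
  exact one_ne_zero (le_antisymm h zero_le_one)

theorem Complex.nonneg_of_norm_one_sub_le (h : ‖1 - w‖ ≤ ε * ‖w‖) : 0 ≤ ε :=
  nonneg_of_mul_nonneg_left ((norm_nonneg _).trans h) (norm_pos_of_norm_one_sub_le h)

theorem Complex.abs_log_norm_le_of_norm_one_sub_le (hε : ε ≤ 1 / 2) (h : ‖1 - w‖ ≤ ε * ‖w‖) :
    |Real.log ‖w‖| ≤ 2 * ε := by
  have hw := norm_pos_of_norm_one_sub_le h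
  have hε0 := nonneg_of_norm_one_sub_le h
  have hnear : |1 - ‖w‖| ≤ ε * ‖w‖ := by
    simpa using (abs_norm_sub_norm_le (1 : ℂ) w).trans h
  obtain ⟨hlo, hhi⟩ := abs_le.mp hnear
  rw [abs_le, Real.le_log_iff_exp_le hw, Real.log_le_iff_le_exp hw]
  constructor
  · -- `1 ≤ ‖w‖ (1 + ε) ≤ ‖w‖ e^ε`
    have h1 : 1 ≤ ‖w‖ * Real.exp ε := by nlinarith [Real.add_one_le_exp ε]
    calc Real.exp (-(2 * ε)) ≤ Real.exp (-ε) := Real.exp_le_exp.mpr (by linarith)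
      _ ≤ ‖w‖ := by rw [Real.exp_neg, inv_le_iff_one_le_mul₀ (Real.exp_pos ε)]; linarith
  · -- `‖w‖ (1 - ε) ≤ 1 ≤ (1 + 2ε)(1 - ε) ≤ e^{2ε} (1 - ε)`, using `ε ≤ 1/2`
    have h2 := Real.add_one_le_exp (2 * ε)
    nlinarith

theorem Complex.abs_arg_le_of_norm_one_sub_le (hε : ε ≤ 1 / 2) (h : ‖1 - w‖ ≤ ε * ‖w‖) :
    |Complex.arg w| ≤ 2 * ε := by
  have hw := norm_pos_of_norm_one_sub_le h
  have hε0 := nonneg_of_norm_one_sub_le h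
  have hre : 0 ≤ w.re := by
    have hnorm : ‖w‖ ≤ ε * ‖w‖ + 1 := by
      simpa using (norm_sub_norm_le w (1 : ℂ)).trans (norm_sub_rev w 1 ▸ h)
    have : 1 - w.re ≤ ε * ‖w‖ := by
      simpa using (Complex.re_le_norm (1 - w)).trans h
    -- `ε ‖w‖ ≤ ε / (1 - ε) ≤ 1`
    nlinarith
  have harg : |Complex.arg w| ≤ Real.pi / 2 := Complex.abs_arg_le_pi_div_two_iff.mpr hre
  have hsin : Real.sin |Complex.arg w| ≤ ε := by
    rw [← Real.abs_sin_eq_sin_abs_of_abs_le_pi (harg.trans (by linarith [Real.pi_pos])),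
      Complex.sin_arg, abs_div, abs_norm, div_le_iff₀ hw]
    simpa using (Complex.abs_im_le_norm (1 - w)).trans h
  have hjordan := Real.mul_le_sin (abs_nonneg _) harg
  rw [div_mul_eq_mul_div, div_le_iff₀ Real.pi_pos] at hjordan
  nlinarith [Real.pi_le_four]

end NearOne

theorem stmt_2_general (d : ℕ) (A : Finset (Fin d → ℤ)) (v : Fin d → ℤ) (hv : v ∈ A)
    (a : (Fin d → ℤ) → ℂ) (ha : ∀ m ∈ A, a m ≠ 0)
    (β : ℝ)
    (hcard : ((A.card : ℝ) - 1) * Real.exp (-β) ≤ 1 / 2)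
    (z : Fin d → ℂ) (hz : ∀ i, z i ≠ 0)
    (hsum : ∑ m ∈ A, a m * ∏ i, z i ^ m i = 1)
    (x : Fin d → ℝ) (hx : ∀ i, x i = Real.log (‖z i‖))
    (hsep : ∀ m ∈ A, m ≠ v →
      (∑ i, (m i : ℝ) * x i) + Real.log (‖a m‖)
        ≤ (∑ i, (v i : ℝ) * x i) + Real.log (‖a v‖) - β) :
    |(∑ i, (v i : ℝ) * x i) + Real.log (‖a v‖)|
        ≤ 2 * ((A.card : ℝ) - 1) * Real.exp (-β) ∧
      |Complex.arg (a v * ∏ i, z i ^ v i)|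
        ≤ 2 * ((A.card : ℝ) - 1) * Real.exp (-β) := by
  classical
  set w : (Fin d → ℤ) → ℂ := fun m => a m * ∏ i, z i ^ m i
  have hlog : ∀ m ∈ A, Real.log ‖w m‖ = ∑ i, (m i : ℝ) * x i + Real.log ‖a m‖ := fun m hm => by
    simp only [w, hx, Complex.log_norm_mul_prod_zpow (ha m hm) hz]
  have hpos : ∀ m ∈ A, 0 < ‖w m‖ := fun m hm =>
    norm_pos_iff.mpr <| mul_ne_zero (ha m hm) <|
      Finset.prod_ne_zero_iff.mpr fun i _ => zpow_ne_zero _ (hz i)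
  have hdom : ∀ m ∈ A, m ≠ v → ‖w m‖ ≤ Real.exp (-β) * ‖w v‖ := fun m hm hmv => by
    rw [← Real.exp_log (hpos m hm), ← Real.exp_log (hpos v hv), ← Real.exp_add,
      Real.exp_le_exp, hlog m hm, hlog v hv]
    linarith [hsep m hm hmv]
  have hnear := norm_one_sub_le_of_sum_eq_one hv hsum hdom
  rw [← hlog v hv, mul_assoc]
  exact ⟨Complex.abs_log_norm_le_of_norm_one_sub_le hcard hnear,
    Complex.abs_arg_le_of_norm_one_sub_le hcard hnear⟩

/-- Paper's Lemma on points of `Z_a` lying over the chart `U_v^β`: if `z` solves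
`∑_{m∈A} a_m z^m = 1` and the monomial `a_v z^v` dominates all others by a factor
`e^{−β}` at `x = log|z|`, then both `|⟨v, log|z|⟩ + λ(v)|` and `|arg(a_v z^v)|`
are bounded by `2(|A|−1)e^{−β}`. -/
theorem stmt_2 (d : ℕ) (A : Finset (Fin d → ℤ)) (v : Fin d → ℤ) (hv : v ∈ A)
    (a : (Fin d → ℤ) → ℂ) (ha : ∀ m ∈ A, a m ≠ 0)
    (β : ℝ) (hβ : 0 < β)
    (hcard : ((A.card : ℝ) - 1) * Real.exp (-β) ≤ 1 / 2)
    (z : Fin d → ℂ) (hz : ∀ i, z i ≠ 0)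
    (hsum : ∑ m ∈ A, a m * ∏ i, z i ^ m i = 1)
    (x : Fin d → ℝ) (hx : ∀ i, x i = Real.log (‖z i‖))
    (hsep : ∀ m ∈ A, m ≠ v →
      (∑ i, (m i : ℝ) * x i) + Real.log (‖a m‖)
        ≤ (∑ i, (v i : ℝ) * x i) + Real.log (‖a v‖) - β) :
    |(∑ i, (v i : ℝ) * x i) + Real.log (‖a v‖)|
        ≤ 2 * ((A.card : ℝ) - 1) * Real.exp (-β) ∧
      |Complex.arg (a v * ∏ i, z i ^ v i)|
        ≤ 2 * ((A.card : ℝ) - 1) * Real.exp (-β) :=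
  stmt_2_general d A v hv a ha β hcard z hz hsum x hx hsep
end

section
/- Let ρ : ℝ^n → ℝ be a mollifier, h > 0, u : ℝ^n → ℝ continuous, Ω ⊆ ℝ^n, v ∈ ℝ^n, c ∈ ℝ, and set S := {x − h z : x ∈ Ω, z ∈ supp ρ}. If u(y + t v) = u(y) + t c for all y ∈ S and t ∈ ℝ with y + t v ∈ S, then the mollification satisfies u_h(x + t v) = u_h(x) + t c for all x ∈ Ω and t ∈ ℝ with x + t v ∈ Ω. (This is part of the paper's Proposition: u_h is linear in the v-direction in Ω if u is linear in the v-direction in the Minkowski sum Ω + h(−P), with equal directional derivatives.) -/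
open MeasureTheory

/-- If `u` is linear in the `v`-direction on the Minkowski sum `S = Ω + h(−supp ρ)`,
then the mollification `u_h(x) = ∫ ρ(z) u(x − h z) dz` is linear in the `v`-direction
on `Ω`, with the same directional derivative `c`. -/
theorem stmt_3 (n : ℕ) (ρ : EuclideanSpace ℝ (Fin n) → ℝ)
    (hρc : Continuous ρ) (hρ0 : ∀ z, 0 ≤ ρ z) (hρsupp : HasCompactSupport ρ)
    (hρ1 : ∫ z, ρ z = 1)
    (h : ℝ) (hh : 0 < h)
    (u : EuclideanSpace ℝ (Fin n) → ℝ) (hu : Continuous u)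
    (Ω : Set (EuclideanSpace ℝ (Fin n))) (v : EuclideanSpace ℝ (Fin n)) (c : ℝ)
    (S : Set (EuclideanSpace ℝ (Fin n)))
    (hS : S = {p | ∃ x ∈ Ω, ∃ z ∈ Function.support ρ, p = x - h • z})
    (hlin : ∀ y ∈ S, ∀ t : ℝ, y + t • v ∈ S → u (y + t • v) = u y + t * c) :
    ∀ x ∈ Ω, ∀ t : ℝ, x + t • v ∈ Ω →
      (∫ z, ρ z * u (x + t • v - h • z)) = (∫ z, ρ z * u (x - h • z)) + t * c := by
  intro x hx t hxt
  have key : ∀ z, ρ z * u (x + t • v - h • z) = ρ z * u (x - h • z) + ρ z * (t * c) := by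
    intro z
    by_cases hz : z ∈ Function.support ρ
    · have h1 : x - h • z ∈ S := by
        rw [hS]; exact ⟨x, hx, z, hz, rfl⟩
      have h2 : (x - h • z) + t • v ∈ S := by
        rw [hS]; exact ⟨x + t • v, hxt, z, hz, by abel⟩
      have := hlin _ h1 t h2
      have heq : x + t • v - h • z = (x - h • z) + t • v := by abel
      rw [heq, this]; ring
    · simp only [Function.mem_support, not_not] at hz
      rw [hz]; ring
  have hint1 : Integrable (fun z => ρ z * u (x - h • z)) := by
    apply Continuous.integrable_of_hasCompactSupport
    · exact hρc.mul (hu.comp (continuous_const.sub (continuous_id.const_smul h)))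
    · exact hρsupp.mul_right
  have hint2 : Integrable (fun z => ρ z * (t * c)) := by
    apply Continuous.integrable_of_hasCompactSupport
    · exact hρc.mul continuous_const
    · exact hρsupp.mul_right
  calc (∫ z, ρ z * u (x + t • v - h • z))
      = ∫ z, (ρ z * u (x - h • z) + ρ z * (t * c)) := by
        exact integral_congr_ae (Filter.Eventually.of_forall key)
    _ = (∫ z, ρ z * u (x - h • z)) + ∫ z, ρ z * (t * c) := integral_add hint1 hint2
    _ = (∫ z, ρ z * u (x - h • z)) + t * c := by
        rw [integral_mul_const, hρ1]; ring
end

section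
/- Let ρ : ℝ^n → ℝ be a mollifier, h > 0, and u : ℝ^n → ℝ continuously differentiable. Then for every x ∈ ℝ^n the mollification u_h is differentiable at x and its gradient ∇u_h(x) lies in the convex hull of the set {∇u(x − h z) : z ∈ supp ρ}. (This is part of the paper's Proposition: the gradient ∇u_h(x), x ∈ Ω, is always inside the convex hull of all possible gradients of u in Ω + h(−P).) -/
open MeasureTheory Set Module

/-!
Differentiating under the integral sign gives `∇u_h(x) = ∫ ρ(z) ∇u(x - h z) dz`, the barycentre
of `z ↦ ∇u(x - h z)` for the probability measure `ρ dz`. In finite dimensions the barycentre of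
a probability measure carried by a convex set `s` lies in `s` itself, not merely in its closure:
if it is not an interior point of `s`, a supporting functional `ℓ` at it is a.e. constant, so
the measure is carried by a hyperplane and we conclude by induction on the dimension.
-/

section Supporting

variable {E : Type*} [NormedAddCommGroup E] [NormedSpace ℝ E] {s : Set E} {b : E}

theorem Convex.exists_ne_zero_forall_le_of_notMem_interior_of_nonempty_interior (hs : Convex ℝ s)
    (hint : (interior s).Nonempty) (hb : b ∉ interior s) :
    ∃ ℓ : E →L[ℝ] ℝ, ℓ ≠ 0 ∧ ∀ c ∈ s, ℓ c ≤ ℓ b := by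
  obtain ⟨ℓ, hℓ⟩ := geometric_hahn_banach_open_point hs.interior isOpen_interior hb
  obtain ⟨a, ha⟩ := hint
  refine ⟨ℓ, fun h => by simpa [h] using hℓ a ha, fun c hc => ?_⟩
  have hc : c ∈ closure (interior s) := by
    rw [hs.closure_interior_eq_closure_of_nonempty_interior ⟨a, ha⟩]
    exact subset_closure hc
  exact closure_minimal (fun x hx => (hℓ x hx).le) (isClosed_le ℓ.continuous continuous_const) hc

theorem Convex.exists_ne_zero_forall_eq_of_interior_eq_empty [FiniteDimensional ℝ E]
    (hs : Convex ℝ s) (hint : interior s = ∅) {c₀ : E} (hc₀ : c₀ ∈ s) :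
    ∃ ℓ : E →L[ℝ] ℝ, ℓ ≠ 0 ∧ ∀ c ∈ s, ℓ c = ℓ c₀ := by
  have hspan : vectorSpan ℝ s < ⊤ := by
    rw [lt_top_iff_ne_top, Ne,
      ← AffineSubspace.affineSpan_eq_top_iff_vectorSpan_eq_top_of_nonempty ℝ E E ⟨c₀, hc₀⟩,
      ← hs.interior_nonempty_iff_affineSpan_eq_top, hint]
    exact Set.not_nonempty_empty
  obtain ⟨f, hf0, hf⟩ := (vectorSpan ℝ s).exists_le_ker_of_lt_top hspan
  refine ⟨LinearMap.toContinuousLinearMap f, by simpa using hf0, fun c hc => ?_⟩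
  simpa [sub_eq_zero] using hf (vsub_mem_vectorSpan ℝ hc hc₀)

theorem Convex.exists_ne_zero_forall_le_of_notMem_interior [FiniteDimensional ℝ E]
    (hs : Convex ℝ s) (hne : s.Nonempty) (hb : b ∉ interior s) :
    ∃ ℓ : E →L[ℝ] ℝ, ℓ ≠ 0 ∧ ∀ c ∈ s, ℓ c ≤ ℓ b := by
  rcases (interior s).eq_empty_or_nonempty with hint | hint
  · obtain ⟨c₀, hc₀⟩ := hne
    obtain ⟨ℓ, hℓ0, hℓ⟩ := hs.exists_ne_zero_forall_eq_of_interior_eq_empty hint hc₀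
    rcases le_total (ℓ c₀) (ℓ b) with hle | hle
    · exact ⟨ℓ, hℓ0, fun c hc => (hℓ c hc).trans_le hle⟩
    · exact ⟨-ℓ, neg_ne_zero.mpr hℓ0, fun c hc => by simpa [hℓ c hc] using hle⟩
  · exact hs.exists_ne_zero_forall_le_of_notMem_interior_of_nonempty_interior hint hb

end Supporting

variable {X : Type*} [MeasurableSpace X] {μ : Measure X}

theorem ae_eq_integral_of_ae_le_integral [IsProbabilityMeasure μ] {φ : X → ℝ}
    (hφ : Integrable φ μ) (hle : ∀ᵐ x ∂μ, φ x ≤ ∫ y, φ y ∂μ) :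
    ∀ᵐ x ∂μ, φ x = ∫ y, φ y ∂μ := by
  have hgap : ∫ x, (∫ y, φ y ∂μ) - φ x ∂μ = 0 := by
    rw [integral_sub (integrable_const _) hφ, integral_const, probReal_univ, one_smul, sub_self]
  have := (integral_eq_zero_iff_of_nonneg_ae (hle.mono fun x hx => sub_nonneg.mpr hx)
    ((integrable_const _).sub hφ)).mp hgap
  filter_upwards [this] with x hx
  exact (sub_eq_zero.mp hx).symm

theorem Convex.integral_mem_of_finiteDimensional {E : Type*} [NormedAddCommGroup E]
    [NormedSpace ℝ E] [FiniteDimensional ℝ E] [IsProbabilityMeasure μ] {s : Set E}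
    (hs : Convex ℝ s) {f : X → E} (hf : ∀ᵐ x ∂μ, f x ∈ s) (hfi : Integrable f μ) :
    ∫ x, f x ∂μ ∈ s := by
  induction hd : finrank ℝ E using Nat.strong_induction_on generalizing E s f with
  | _ d ih =>
  set b := ∫ x, f x ∂μ
  by_cases hb : b ∈ interior s
  · exact interior_subset hb
  obtain ⟨x₀, hx₀⟩ := hf.exists
  obtain ⟨ℓ, hℓ0, hℓ⟩ := hs.exists_ne_zero_forall_le_of_notMem_interior ⟨f x₀, hx₀⟩ hb
  have hℓb : ∫ x, ℓ (f x) ∂μ = ℓ b := ℓ.integral_comp_comm hfi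
  have hℓf : ∀ᵐ x ∂μ, ℓ (f x) = ℓ b := by
    rw [← hℓb]
    exact ae_eq_integral_of_ae_le_integral (ℓ.integrable_comp hfi)
      (hℓb ▸ hf.mono fun x hx => hℓ _ hx)
  -- `f - b` takes values in `K` only a.e.; composing with a projection onto `K` makes it
  -- a genuine `K`-valued function, to which the induction hypothesis applies.
  set K := LinearMap.ker (ℓ : E →ₗ[ℝ] ℝ)
  obtain ⟨P, hP⟩ := Submodule.ClosedComplemented.of_finiteDimensional K
  have hKd : finrank ℝ K < d := hd ▸ Submodule.finrank_lt
    (LinearMap.ker_eq_top.not.mpr fun h => hℓ0 (ContinuousLinearMap.coe_injective h))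
  have hg : Integrable (fun x => f x - b) μ := hfi.sub (integrable_const b)
  have hK : ∫ x, P (f x - b) ∂μ ∈ {k : K | (k : E) + b ∈ s} :=
    ih _ hKd ((hs.translate_preimage_left b).linear_preimage K.subtype) ?_
      (P.integrable_comp hg) rfl
  · rwa [P.integral_comp_comm hg, integral_sub hfi (integrable_const b),
      integral_const, probReal_univ, one_smul, sub_self, map_zero, mem_ofPred_eq,
      Submodule.coe_zero, zero_add] at hK
  · filter_upwards [hf, hℓf] with x hxs hxℓ
    have hxK : f x - b ∈ K := by simp [K, hxℓ]
    simpa [hP ⟨_, hxK⟩] using hxs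

theorem integral_smul_mem_convexHull_image_support {E : Type*} [NormedAddCommGroup E]
    [NormedSpace ℝ E] [FiniteDimensional ℝ E] {ν : Measure X} {ρ : X → ℝ} (hρ0 : ∀ x, 0 ≤ ρ x)
    (hρ1 : ∫ x, ρ x ∂ν = 1) {v : X → E} (hv : Integrable (fun x => ρ x • v x) ν) :
    ∫ x, ρ x • v x ∂ν ∈ convexHull ℝ (v '' Function.support ρ) := by
  have hρ : Integrable ρ ν := .of_integral_ne_zero (by rw [hρ1]; exact one_ne_zero)
  have hdens : AEMeasurable (fun x => ENNReal.ofReal (ρ x)) ν := hρ.aemeasurable.ennreal_ofReal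
  have hfin : ∀ᵐ x ∂ν, ENNReal.ofReal (ρ x) < ⊤ := .of_forall fun _ => ENNReal.ofReal_lt_top
  set μ := ν.withDensity fun x => ENNReal.ofReal (ρ x)
  have : IsProbabilityMeasure μ := ⟨by
    rw [withDensity_apply _ MeasurableSet.univ, Measure.restrict_univ,
      ← ofReal_integral_eq_lintegral_ofReal hρ (.of_forall hρ0), hρ1, ENNReal.ofReal_one]⟩
  have hsmul : (fun x => (ENNReal.ofReal (ρ x)).toReal • v x) = fun x => ρ x • v x := by
    simp only [ENNReal.toReal_ofReal (hρ0 _)]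
  rw [← hsmul, ← integral_withDensity_eq_integral_toReal_smul₀ hdens hfin]
  refine (convex_convexHull ℝ _).integral_mem_of_finiteDimensional ?_
    ((integrable_withDensity_iff_integrable_smul₀' hdens hfin).mpr (hsmul ▸ hv))
  refine (ae_withDensity_iff' hdens).mpr
    (.of_forall fun x hx => subset_convexHull ℝ _ ⟨x, ?_, rfl⟩)
  exact (by simpa using hx : 0 < ρ x).ne'

theorem MeasureTheory.Integrable.smul_continuous_of_hasCompactSupport {X F : Type*}
    [TopologicalSpace X] [T2Space X] [MeasurableSpace X] [OpensMeasurableSpace X]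
    [NormedAddCommGroup F] [NormedSpace ℝ F] [SecondCountableTopologyEither X F]
    {μ : Measure X} {ρ : X → ℝ} (hρ : Integrable ρ μ) (hρs : HasCompactSupport ρ)
    {g : X → F} (hg : Continuous g) : Integrable (fun x => ρ x • g x) μ := by
  refine (integrableOn_iff_integrable_of_support_subset (f := fun x => ρ x • g x)
    ((Function.support_smul_subset_left ρ g).trans (subset_tsupport ρ))).mp ?_
  exact hρ.integrableOn.smul_continuousOn hg.continuousOn hρs

theorem hasFDerivAt_integral_smul_comp_sub_smul {E F : Type*} [NormedAddCommGroup E]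
    [NormedSpace ℝ E] [FiniteDimensional ℝ E] [MeasurableSpace E] [BorelSpace E]
    [NormedAddCommGroup F] [NormedSpace ℝ F] {μ : Measure E} {ρ : E → ℝ}
    (hρ : Integrable ρ μ) (hρs : HasCompactSupport ρ)
    {u : E → F} (hu : ContDiff ℝ 1 u) (h : ℝ) (x : E) :
    HasFDerivAt (fun y => ∫ z, ρ z • u (y - h • z) ∂μ)
      (∫ z, ρ z • fderiv ℝ u (x - h • z) ∂μ) x := by
  have hshift : ∀ y : E, Continuous fun z : E => y - h • z := fun y => by fun_prop
  have hu' : Continuous (fderiv ℝ u) := hu.continuous_fderiv one_ne_zero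
  obtain ⟨C, hC⟩ := (((isCompact_closedBall x 1).prod hρs).image
    (show Continuous fun p : E × E => p.1 - h • p.2 by fun_prop)).exists_bound_of_continuousOn
    hu'.continuousOn
  refine hasFDerivAt_integral_of_dominated_of_fderiv_le
    (F' := fun y z => ρ z • fderiv ℝ u (y - h • z)) (bound := fun z => ‖ρ z‖ * C)
    (Metric.ball_mem_nhds x one_pos)
    (.of_forall fun y => (hρ.smul_continuous_of_hasCompactSupport hρs
      (hu.continuous.comp (hshift y))).aestronglyMeasurable)
    (hρ.smul_continuous_of_hasCompactSupport hρs (hu.continuous.comp (hshift x)))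
    (hρ.smul_continuous_of_hasCompactSupport hρs (hu'.comp (hshift x))).aestronglyMeasurable
    (.of_forall fun z y hy => ?_) (hρ.norm.mul_const C)
    (.of_forall fun z y _ => ?_)
  · rw [norm_smul]
    by_cases hz : ρ z = 0
    · simp [hz]
    · exact mul_le_mul_of_nonneg_left (hC _ ⟨(y, z), ⟨Metric.ball_subset_closedBall hy,
        subset_tsupport ρ hz⟩, rfl⟩) (norm_nonneg _)
  · exact ((hu.differentiable one_ne_zero (y - h • z)).hasFDerivAt.comp y
      ((hasFDerivAt_id y).sub_const (h • z))).const_smul (ρ z)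

theorem stmt_5_general (n : ℕ) (ρ : EuclideanSpace ℝ (Fin n) → ℝ)
    (hρ0 : ∀ z, 0 ≤ ρ z) (hρsupp : HasCompactSupport ρ)
    (hρ1 : ∫ z, ρ z = 1)
    (h : ℝ)
    (u : EuclideanSpace ℝ (Fin n) → ℝ) (hu : ContDiff ℝ 1 u) :
    ∀ x, ∃ g, HasGradientAt (fun y => ∫ z, ρ z * u (y - h • z)) g x ∧
      g ∈ convexHull ℝ ((fun z => gradient u (x - h • z)) '' Function.support ρ) := by
  intro x
  have hρ : Integrable ρ := .of_integral_ne_zero (by rw [hρ1]; exact one_ne_zero)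
  have hv : Continuous fun z => gradient u (x - h • z) :=
    ((InnerProductSpace.toDual ℝ _).symm.continuous.comp (hu.continuous_fderiv one_ne_zero)).comp
      (by fun_prop)
  have hvi := hρ.smul_continuous_of_hasCompactSupport hρsupp hv
  refine ⟨_, ?_, integral_smul_mem_convexHull_image_support hρ0 hρ1 hvi⟩
  have hdual := (InnerProductSpace.toDual ℝ _).toLinearIsometry.integral_comp_comm (μ := volume)
    (fun z => ρ z • gradient u (x - h • z))
  simp only [LinearIsometryEquiv.coe_toLinearIsometry] at hdual
  rw [hasGradientAt_iff_hasFDerivAt, ← hdual]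
  simpa [gradient] using hasFDerivAt_integral_smul_comp_sub_smul hρ hρsupp hu h x

/-- For a `C¹` function `u`, the mollification `u_h(x) = ∫ ρ(z) u(x − h z) dz` is
differentiable at every `x`, and its gradient lies in the convex hull of the set of
gradients `{∇u(x − h z) : z ∈ supp ρ}`. -/
theorem stmt_5 (n : ℕ) (ρ : EuclideanSpace ℝ (Fin n) → ℝ)
    (hρc : Continuous ρ) (hρ0 : ∀ z, 0 ≤ ρ z) (hρsupp : HasCompactSupport ρ)
    (hρ1 : ∫ z, ρ z = 1)
    (h : ℝ) (hh : 0 < h)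
    (u : EuclideanSpace ℝ (Fin n) → ℝ) (hu : ContDiff ℝ 1 u) :
    ∀ x, ∃ g, HasGradientAt (fun y => ∫ z, ρ z * u (y - h • z)) g x ∧
      g ∈ convexHull ℝ ((fun z => gradient u (x - h • z)) '' Function.support ρ) :=
  stmt_5_general n ρ hρ0 hρsupp hρ1 h u hu
end

section
/- Let ρ : ℝ^n → ℝ be a mollifier, h > 0, and let P ⊆ ℝ^n be a nonempty open convex set on which ρ is strictly positive. Let u : ℝ^n → ℝ be continuous and convex on all of ℝ^n, and strictly convex on a nonempty open convex set Ω ⊆ ℝ^n. Then the mollification u_h is strictly convex on the Minkowski sum Ω + h·P = {ω + h p : ω ∈ Ω, p ∈ P}. (This is part of the paper's Proposition: u_h is strictly convex in Ω + h(−P) if u is convex in ℝ^n and strictly convex in Ω.) -/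
open MeasureTheory Pointwise

lemma aux_strict {E : Type*} [NormedAddCommGroup E] [NormedSpace ℝ E]
    {u : E → ℝ} (huconv : ConvexOn ℝ Set.univ u)
    {Ω : Set E} (hΩopen : IsOpen Ω) (hustrict : StrictConvexOn ℝ Ω u)
    {a b : E} (hab : a ≠ b) {s t : ℝ} (hs : 0 < s) (ht : 0 < t) (hst : s + t = 1)
    (hc : s • a + t • b ∈ Ω) : u (s • a + t • b) < s * u a + t * u b := by
  obtain rfl : t = 1 - s := by linarith
  set c := s • a + (1 - s) • b with hcdef
  obtain ⟨δ, hδ, hball⟩ := Metric.isOpen_iff.1 hΩopen c hc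
  set ε : ℝ := min (1/2) (δ / (‖a - c‖ + ‖b - c‖ + 1)) with hε
  have hden : 0 < ‖a - c‖ + ‖b - c‖ + 1 := by positivity
  have hε0 : 0 < ε := lt_min (by norm_num) (div_pos hδ hden)
  have hε1 : ε < 1 := lt_of_le_of_lt (min_le_left _ _) (by norm_num)
  set a' : E := (1 - ε) • c + ε • a with ha'
  set b' : E := (1 - ε) • c + ε • b with hb'
  have hda : a' ∈ Ω := by
    apply hball
    have hrw : a' - c = ε • (a - c) := by rw [ha']; module
    simp only [Metric.mem_ball, dist_eq_norm, hrw, norm_smul, Real.norm_eq_abs,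
      abs_of_pos hε0]
    calc ε * ‖a - c‖ ≤ (δ / (‖a - c‖ + ‖b - c‖ + 1)) * ‖a - c‖ :=
          mul_le_mul_of_nonneg_right (min_le_right _ _) (norm_nonneg _)
      _ < δ := by
          rw [div_mul_eq_mul_div, div_lt_iff₀ hden]
          nlinarith [norm_nonneg (a - c), norm_nonneg (b - c)]
  have hdb : b' ∈ Ω := by
    apply hball
    have hrw : b' - c = ε • (b - c) := by rw [hb']; module
    simp only [Metric.mem_ball, dist_eq_norm, hrw, norm_smul, Real.norm_eq_abs,
      abs_of_pos hε0]
    calc ε * ‖b - c‖ ≤ (δ / (‖a - c‖ + ‖b - c‖ + 1)) * ‖b - c‖ :=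
          mul_le_mul_of_nonneg_right (min_le_right _ _) (norm_nonneg _)
      _ < δ := by
          rw [div_mul_eq_mul_div, div_lt_iff₀ hden]
          nlinarith [norm_nonneg (a - c), norm_nonneg (b - c)]
  have hne : a' ≠ b' := by
    intro hEq
    apply hab
    have h2 : ε • (a - b) = 0 := by
      rw [ha', hb'] at hEq
      have := sub_eq_zero.2 hEq
      rw [add_sub_add_left_eq_sub, ← smul_sub] at this
      exact this
    rcases smul_eq_zero.1 h2 with h1 | h1
    · exact absurd h1 (ne_of_gt hε0)
    · exact sub_eq_zero.1 h1
  have hcomb : s • a' + (1 - s) • b' = c := by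
    rw [ha', hb', hcdef]; module
  have hstrict : u c < s * u a' + (1 - s) * u b' := by
    rw [← hcomb]
    exact hustrict.2 hda hdb hne hs ht hst
  have hua' : u a' ≤ (1 - ε) * u c + ε * u a :=
    huconv.2 (Set.mem_univ c) (Set.mem_univ a) (by linarith) (le_of_lt hε0) (by ring)
  have hub' : u b' ≤ (1 - ε) * u c + ε * u b :=
    huconv.2 (Set.mem_univ c) (Set.mem_univ b) (by linarith) (le_of_lt hε0) (by ring)
  have key : ε * u c < ε * (s * u a + (1 - s) * u b) := by
    nlinarith [mul_le_mul_of_nonneg_left hua' hs.le,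
      mul_le_mul_of_nonneg_left hub' ht.le]
  exact (mul_lt_mul_iff_right₀ hε0).1 key

/-- If `u` is convex on `ℝⁿ` and strictly convex on a nonempty open convex set `Ω`, and the
mollifier `ρ` is strictly positive on a nonempty open convex set `P`, then the mollification
`u_h(x) = ∫ ρ(z) u(x − h z) dz` is strictly convex on the Minkowski sum `Ω + h • P`. -/
theorem stmt_6 (n : ℕ) (ρ : EuclideanSpace ℝ (Fin n) → ℝ)
    (hρc : Continuous ρ) (hρ0 : ∀ z, 0 ≤ ρ z) (hρsupp : HasCompactSupport ρ)
    (hρ1 : ∫ z, ρ z = 1)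
    (h : ℝ) (hh : 0 < h)
    (P : Set (EuclideanSpace ℝ (Fin n))) (hP : P.Nonempty) (hPopen : IsOpen P)
    (hPconv : Convex ℝ P) (hρP : ∀ z ∈ P, 0 < ρ z)
    (u : EuclideanSpace ℝ (Fin n) → ℝ) (hu : Continuous u)
    (huconv : ConvexOn ℝ Set.univ u)
    (Ω : Set (EuclideanSpace ℝ (Fin n))) (hΩ : Ω.Nonempty) (hΩopen : IsOpen Ω)
    (hΩconv : Convex ℝ Ω) (hustrict : StrictConvexOn ℝ Ω u) :
    StrictConvexOn ℝ (Ω + h • P) (fun x => ∫ z, ρ z * u (x - h • z)) := by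
  have hconvset : Convex ℝ (Ω + h • P) := hΩconv.add (hPconv.smul h)
  have hcontz : ∀ x : EuclideanSpace ℝ (Fin n),
      Continuous (fun z : EuclideanSpace ℝ (Fin n) => x - h • z) :=
    fun x => continuous_const.sub (continuous_const_smul h)
  have hint : ∀ x : EuclideanSpace ℝ (Fin n),
      Integrable (fun z => ρ z * u (x - h • z)) := by
    intro x
    have hcont : Continuous (fun z : EuclideanSpace ℝ (Fin n) => ρ z * u (x - h • z)) :=
      hρc.mul (hu.comp (hcontz x))
    exact hcont.integrable_of_hasCompactSupport hρsupp.mul_right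
  refine ⟨hconvset, ?_⟩
  rintro x hx y hy hxy s t hs ht hst
  obtain rfl : t = 1 - s := by linarith
  obtain ⟨ωx, hωx, px', hpx', hxeq⟩ := Set.mem_add.1 hx
  obtain ⟨ωy, hωy, py', hpy', hyeq⟩ := Set.mem_add.1 hy
  obtain ⟨px, hpx, rfl⟩ := hpx'
  obtain ⟨py, hpy, rfl⟩ := hpy'
  simp only at hxeq hyeq
  set z₀ : EuclideanSpace ℝ (Fin n) := s • px + (1 - s) • py with hz₀
  have hz₀P : z₀ ∈ P := hPconv hpx hpy (le_of_lt hs) (le_of_lt ht) hst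
  have hcΩ : (s • x + (1 - s) • y) - h • z₀ ∈ Ω := by
    have hrw : (s • x + (1 - s) • y) - h • z₀ = s • ωx + (1 - s) • ωy := by
      rw [← hxeq, ← hyeq, hz₀]; module
    rw [hrw]
    exact hΩconv hωx hωy (le_of_lt hs) (le_of_lt ht) hst
  have hpt : ∀ z, ρ z * u ((s • x + (1 - s) • y) - h • z)
      ≤ ρ z * (s * u (x - h • z) + (1 - s) * u (y - h • z)) := by
    intro z
    apply mul_le_mul_of_nonneg_left _ (hρ0 z)
    have hrw : (s • x + (1 - s) • y) - h • z
        = s • (x - h • z) + (1 - s) • (y - h • z) := by module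
    rw [hrw]
    exact huconv.2 (Set.mem_univ _) (Set.mem_univ _) (le_of_lt hs) (le_of_lt ht) hst
  have hstrictpt : ρ z₀ * u ((s • x + (1 - s) • y) - h • z₀)
      < ρ z₀ * (s * u (x - h • z₀) + (1 - s) * u (y - h • z₀)) := by
    apply mul_lt_mul_of_pos_left _ (hρP z₀ hz₀P)
    have hab : x - h • z₀ ≠ y - h • z₀ := by
      intro hEq; exact hxy (by simpa [sub_left_inj] using hEq)
    have hrw : (s • x + (1 - s) • y) - h • z₀
        = s • (x - h • z₀) + (1 - s) • (y - h • z₀) := by module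
    rw [hrw]
    exact aux_strict huconv hΩopen hustrict hab hs ht hst (hrw ▸ hcΩ)
  have hintL := hint (s • x + (1 - s) • y)
  have hintR : Integrable
      (fun z => ρ z * (s * u (x - h • z) + (1 - s) * u (y - h • z))) := by
    have hEq : (fun z => ρ z * (s * u (x - h • z) + (1 - s) * u (y - h • z)))
        = fun z => s * (ρ z * u (x - h • z)) + (1 - s) * (ρ z * u (y - h • z)) := by
      funext z; ring
    rw [hEq]
    exact ((hint x).const_mul s).add ((hint y).const_mul (1 - s))
  have hlt : ∫ z, ρ z * u ((s • x + (1 - s) • y) - h • z)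
      < ∫ z, ρ z * (s * u (x - h • z) + (1 - s) * u (y - h • z)) := by
    rw [← sub_pos, ← integral_sub hintR hintL]
    set φ : EuclideanSpace ℝ (Fin n) → ℝ := fun z =>
      ρ z * (s * u (x - h • z) + (1 - s) * u (y - h • z))
        - ρ z * u ((s • x + (1 - s) • y) - h • z) with hφ
    have hφ0 : ∀ z, 0 ≤ φ z := fun z => sub_nonneg.2 (hpt z)
    have hφcont : Continuous φ := by
      apply Continuous.sub
      · exact hρc.mul ((continuous_const.mul (hu.comp (hcontz x))).add
          (continuous_const.mul (hu.comp (hcontz y))))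
      · exact hρc.mul (hu.comp (hcontz (s • x + (1 - s) • y)))
    have hφint : Integrable φ := hintR.sub hintL
    rw [integral_pos_iff_support_of_nonneg hφ0 hφint]
    have hsub : {z | 0 < φ z} ⊆ Function.support φ := fun z hz => ne_of_gt hz
    have hop : IsOpen {z | 0 < φ z} := isOpen_lt continuous_const hφcont
    have hne : z₀ ∈ {z | 0 < φ z} := sub_pos.2 hstrictpt
    calc (0 : ENNReal) < volume {z | 0 < φ z} := hop.measure_pos volume ⟨z₀, hne⟩
      _ ≤ volume (Function.support φ) := measure_mono hsub
  calc ∫ z, ρ z * u ((s • x + (1 - s) • y) - h • z)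
      < ∫ z, ρ z * (s * u (x - h • z) + (1 - s) * u (y - h • z)) := hlt
    _ = s * (∫ z, ρ z * u (x - h • z)) + (1 - s) * (∫ z, ρ z * u (y - h • z)) := by
        have hEq : (fun z => ρ z * (s * u (x - h • z) + (1 - s) * u (y - h • z)))
            = fun z => s * (ρ z * u (x - h • z)) + (1 - s) * (ρ z * u (y - h • z)) := by
          funext z; ring
        rw [hEq, integral_add ((hint x).const_mul s) ((hint y).const_mul (1 - s)),
          integral_const_mul, integral_const_mul]
    _ = s • (fun x => ∫ z, ρ z * u (x - h • z)) x
        + (1 - s) • (fun x => ∫ z, ρ z * u (x - h • z)) y := by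
        simp [smul_eq_mul]
end

section
/- Let g : ℝ → ℝ be convex on the segment [a, b] with a < b, and strictly convex on an open subinterval (c, d) with a ≤ c < d ≤ b. Then for every t ∈ (0, 1) such that the point x = (1 − t)a + t b lies in (c, d), one has the strict inequality g(x) < (1 − t)g(a) + t g(b). -/
/-- If `g` is convex on `[a, b]` and strictly convex on an open subinterval `(c, d)`,
then for every `t ∈ (0,1)` such that `x = (1−t)a + tb ∈ (c, d)` one has the strict
inequality `g(x) < (1−t)g(a) + t g(b)`. -/
theorem stmt_7 (g : ℝ → ℝ) (a b c d : ℝ) (hab : a < b) (hac : a ≤ c) (hcd : c < d)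
    (hdb : d ≤ b)
    (hconv : ConvexOn ℝ (Set.Icc a b) g)
    (hstrict : StrictConvexOn ℝ (Set.Ioo c d) g) :
    ∀ t ∈ Set.Ioo (0 : ℝ) 1, (1 - t) * a + t * b ∈ Set.Ioo c d →
      g ((1 - t) * a + t * b) < (1 - t) * g a + t * g b := by
  intro t ht hx
  obtain ⟨ht0, ht1⟩ := ht
  obtain ⟨hxc, hxd⟩ := hx
  set x : ℝ := (1 - t) * a + t * b with hxdef
  have hba : (0:ℝ) < b - a := by linarith
  -- chord inequality
  have chord : ∀ s : ℝ, 0 ≤ s → s ≤ 1 → g ((1 - s) * a + s * b) ≤ (1 - s) * g a + s * g b := by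
    intro s h0 h1
    have := hconv.2 (Set.left_mem_Icc.mpr hab.le) (Set.right_mem_Icc.mpr hab.le)
      (by linarith : (0:ℝ) ≤ 1 - s) h0 (by ring)
    simpa [smul_eq_mul] using this
  -- choose δ
  set δ : ℝ := min (min ((d - x) / (b - a)) ((x - c) / (b - a))) (min t (1 - t)) / 2 with hδdef
  have hδpos : 0 < δ := by
    apply div_pos _ (by norm_num)
    apply lt_min (lt_min (div_pos (by linarith) hba) (div_pos (by linarith) hba))
      (lt_min ht0 (by linarith))
  have hδ1 : δ * (b - a) < d - x := by
    have h1 : δ < (d - x) / (b - a) := by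
      have : min (min ((d - x) / (b - a)) ((x - c) / (b - a))) (min t (1 - t)) ≤ (d - x) / (b - a) :=
        le_trans (min_le_left _ _) (min_le_left _ _)
      calc δ < min (min ((d - x) / (b - a)) ((x - c) / (b - a))) (min t (1 - t)) := by
              rw [hδdef]; linarith [hδpos]
        _ ≤ (d - x) / (b - a) := this
    calc δ * (b - a) < (d - x) / (b - a) * (b - a) := by
          exact mul_lt_mul_of_pos_right h1 hba
      _ = d - x := by field_simp
  have hδ2 : δ * (b - a) < x - c := by
    have h1 : δ < (x - c) / (b - a) := by
      have : min (min ((d - x) / (b - a)) ((x - c) / (b - a))) (min t (1 - t)) ≤ (x - c) / (b - a) :=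
        le_trans (min_le_left _ _) (min_le_right _ _)
      calc δ < min (min ((d - x) / (b - a)) ((x - c) / (b - a))) (min t (1 - t)) := by
              rw [hδdef]; linarith [hδpos]
        _ ≤ (x - c) / (b - a) := this
    calc δ * (b - a) < (x - c) / (b - a) * (b - a) := by
          exact mul_lt_mul_of_pos_right h1 hba
      _ = x - c := by field_simp
  have hδt : δ < t := by
    have : min (min ((d - x) / (b - a)) ((x - c) / (b - a))) (min t (1 - t)) ≤ t :=
      le_trans (min_le_right _ _) (min_le_left _ _)
    rw [hδdef]; linarith [hδpos]
  have hδt1 : δ < 1 - t := by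
    have : min (min ((d - x) / (b - a)) ((x - c) / (b - a))) (min t (1 - t)) ≤ 1 - t :=
      le_trans (min_le_right _ _) (min_le_right _ _)
    rw [hδdef]; linarith [hδpos]
  set xm : ℝ := (1 - (t - δ)) * a + (t - δ) * b with hxm
  set xp : ℝ := (1 - (t + δ)) * a + (t + δ) * b with hxp
  have hxm_eq : xm = x - δ * (b - a) := by rw [hxm, hxdef]; ring
  have hxp_eq : xp = x + δ * (b - a) := by rw [hxp, hxdef]; ring
  have hδba : 0 < δ * (b - a) := mul_pos hδpos hba
  have hmem_m : xm ∈ Set.Ioo c d := by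
    rw [hxm_eq]; constructor <;> [linarith; linarith]
  have hmem_p : xp ∈ Set.Ioo c d := by
    rw [hxp_eq]; constructor <;> [linarith; linarith]
  have hne : xm ≠ xp := by rw [hxm_eq, hxp_eq]; intro h; linarith
  have hstrictmid := hstrict.2 hmem_m hmem_p hne (by norm_num : (0:ℝ) < 1/2)
    (by norm_num : (0:ℝ) < 1/2) (by norm_num)
  have hmid : (1/2 : ℝ) • xm + (1/2 : ℝ) • xp = x := by
    rw [smul_eq_mul, smul_eq_mul, hxm_eq, hxp_eq]; ring
  rw [hmid] at hstrictmid
  have h1 := chord (t - δ) (by linarith) (by linarith)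
  have h2 := chord (t + δ) (by linarith) (by linarith)
  rw [← hxm] at h1
  rw [← hxp] at h2
  simp only [smul_eq_mul] at hstrictmid
  calc g x < 1/2 * g xm + 1/2 * g xp := hstrictmid
    _ ≤ 1/2 * ((1 - (t - δ)) * g a + (t - δ) * g b)
        + 1/2 * ((1 - (t + δ)) * g a + (t + δ) * g b) := by nlinarith
    _ = (1 - t) * g a + t * g b := by ring
end

section
/- Let ι be a nonempty finite index set, n_i ∈ ℝ^d and ν_i ∈ ℝ for i ∈ ι, and define the piecewise-linear convex function L(x) := max_{i ∈ ι} (⟨n_i, x⟩ + ν_i). Let ρ : ℝ^d → ℝ be a continuously differentiable mollifier and h > 0. Then the mollification L_h is differentiable, and for every x ∈ ℝ^d the gradient ∇L_h(x) lies in the convex hull of {n_i : i ∈ ι}. (This is the core of part (2) of the paper's Lemma: the slopes of the smoothed Legendre transform L_{ν,h^∨} always lie in the polytope spanned by the vertices.) -/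
open MeasureTheory RealInnerProductSpace Filter Set Topology
open scoped Convolution

/-!
Write `M(v) := max_i ⟪n_i, v⟫`. Since `L(y + t v) ≤ L(y) + t M(v)` for every `y` and `t ≥ 0`,
averaging against the probability density `ρ` gives the same bound for `L_h`, so
`⟪∇L_h(x), v⟫ ≤ M(v)` for every direction `v`. A point whose inner products are dominated by the
support function of the finite set `{n_i}` in every direction lies in its convex hull, by
Hahn–Banach. Differentiability holds because, after rescaling by `h`, `L_h` is the convolution
of the `C¹` compactly supported `ρ` with a continuous function.
-/

section MaxAffine

variable {E ι : Type*} [NormedAddCommGroup E] [InnerProductSpace ℝ E] [Finite ι]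

theorem continuous_iSup_inner_add [Nonempty ι] (n : ι → E) (ν : ι → ℝ) :
    Continuous fun x => ⨆ i, ⟪n i, x⟫ + ν i := by
  cases nonempty_fintype ι
  simp_rw [← Finset.sup'_univ_eq_ciSup]
  exact Continuous.finset_sup'_apply _ fun i _ => by fun_prop

theorem iSup_inner_add_le [Nonempty ι] (n : ι → E) (ν : ι → ℝ) (x w : E) :
    ⨆ i, ⟪n i, x + w⟫ + ν i ≤ (⨆ i, ⟪n i, x⟫ + ν i) + ⨆ i, ⟪n i, w⟫ := by
  refine ciSup_le fun i => ?_
  rw [inner_add_right, add_right_comm]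
  exact add_le_add (le_ciSup (f := fun j => ⟪n j, x⟫ + ν j) (Set.finite_range _).bddAbove i)
    (le_ciSup (f := fun j => ⟪n j, w⟫) (Set.finite_range _).bddAbove i)

theorem iSup_inner_add_smul_le [Nonempty ι] (n : ι → E) (ν : ι → ℝ) (x v : E) {t : ℝ}
    (ht : 0 ≤ t) :
    ⨆ i, ⟪n i, x + t • v⟫ + ν i ≤ (⨆ i, ⟪n i, x⟫ + ν i) + t * ⨆ i, ⟪n i, v⟫ := by
  simpa only [real_inner_smul_right, Real.mul_iSup_of_nonneg ht] using
    iSup_inner_add_le n ν x (t • v)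

variable [CompleteSpace E]

theorem mem_convexHull_range_of_inner_le_iSup [Nonempty ι] {n : ι → E} {g : E}
    (hg : ∀ v, ⟪g, v⟫ ≤ ⨆ i, ⟪n i, v⟫) : g ∈ convexHull ℝ (range n) := by
  by_contra hgn
  obtain ⟨f, u, hfn, hfg⟩ := geometric_hahn_banach_closed_point (convex_convexHull ℝ _)
    ((Set.finite_range n).isCompact_convexHull (𝕜 := ℝ)).isClosed hgn
  set v := (InnerProductSpace.toDual ℝ E).symm f
  have hv : ∀ w, ⟪w, v⟫ = f w := fun w => by
    rw [real_inner_comm, InnerProductSpace.toDual_symm_apply]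
  have hsup : ⨆ i, ⟪n i, v⟫ ≤ u := ciSup_le fun i => by
    rw [hv]
    exact (hfn _ (subset_convexHull ℝ _ (mem_range_self i))).le
  linarith [hg v, hv g]

end MaxAffine

theorem fderiv_apply_le_of_add_smul_le {E : Type*} [NormedAddCommGroup E] [NormedSpace ℝ E]
    {F : E → ℝ} {x v : E} {M : ℝ} (hF : DifferentiableAt ℝ F x)
    (hle : ∀ t > 0, F (x + t • v) ≤ F x + t * M) : fderiv ℝ F x v ≤ M := by
  refine le_of_tendsto (hF.hasFDerivAt.hasLineDerivAt v).tendsto_slope_zero_right ?_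
  filter_upwards [self_mem_nhdsWithin] with t (ht : 0 < t)
  rw [smul_eq_mul, inv_mul_le_iff₀ ht]
  linarith [hle t ht]

section Mollification

variable {E : Type*} [NormedAddCommGroup E] [NormedSpace ℝ E] [MeasurableSpace E]
  (μ : Measure E)

noncomputable def mollify (ρ L : E → ℝ) (h : ℝ) (x : E) : ℝ := ∫ z, ρ z * L (x - h • z) ∂μ

variable {μ} {ρ L : E → ℝ} {h : ℝ}

theorem mollify_eq_convolution (hh : h ≠ 0) :
    mollify μ ρ L h =
      fun x => (ρ ⋆[ContinuousLinearMap.mul ℝ ℝ, μ] fun y => L (h • y)) (h⁻¹ • x) := by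
  ext x
  simp only [mollify, convolution_def, ContinuousLinearMap.mul_apply', smul_sub, smul_smul,
    mul_inv_cancel₀ hh, one_smul]

theorem differentiable_mollify [BorelSpace E] [SFinite μ] [μ.IsAddLeftInvariant]
    [μ.IsNegInvariant] [IsLocallyFiniteMeasure μ] (hρ : ContDiff ℝ 1 ρ)
    (hρs : HasCompactSupport ρ) (hL : Continuous L) (hh : h ≠ 0) :
    Differentiable ℝ (mollify μ ρ L h) := by
  have hconv : Differentiable ℝ (ρ ⋆[ContinuousLinearMap.mul ℝ ℝ, μ] fun y => L (h • y)) :=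
    fun x => (hρs.hasFDerivAt_convolution_left _ hρ
      (hL.comp (continuous_const_smul h)).locallyIntegrable x).differentiableAt
  rw [mollify_eq_convolution hh]
  exact hconv.comp (differentiable_id.const_smul h⁻¹)

theorem mollify_add_le [OpensMeasurableSpace E] [IsFiniteMeasureOnCompacts μ]
    (hρ0 : ∀ z, 0 ≤ ρ z) (hρ1 : ∫ z, ρ z ∂μ = 1) (hρ : Continuous ρ) (hρs : HasCompactSupport ρ)
    (hL : Continuous L) {w : E} {c : ℝ} (hLw : ∀ y, L (y + w) ≤ L y + c) (x : E) :
    mollify μ ρ L h (x + w) ≤ mollify μ ρ L h x + c := by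
  have hint : ∀ y, Integrable (fun z => ρ z * L (y - h • z)) μ := fun y =>
    (hρ.mul (hL.comp (by fun_prop))).integrable_of_hasCompactSupport hρs.mul_right
  have hρint : Integrable ρ μ := hρ.integrable_of_hasCompactSupport hρs
  calc mollify μ ρ L h (x + w)
      ≤ ∫ z, ρ z * L (x - h • z) + c * ρ z ∂μ := by
        refine integral_mono (hint _) ((hint x).add (hρint.const_mul c)) fun z => ?_
        have := mul_le_mul_of_nonneg_left (hLw (x - h • z)) (hρ0 z)
        rw [sub_add_eq_add_sub] at this
        linarith
    _ = mollify μ ρ L h x + c := by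
        rw [integral_add (hint x) (hρint.const_mul c), integral_const_mul, hρ1, mul_one, mollify]

end Mollification

/-- For the piecewise-linear convex function `L(x) = max_i (⟨n_i, x⟩ + ν_i)` and a `C¹`
mollifier `ρ`, the mollification `L_h(x) = ∫ ρ(z) L(x − h z) dz` is differentiable and
its gradient at every point lies in the convex hull of the slopes `{n_i}`. -/
theorem stmt_10 (d : ℕ) (ι : Type*) [Fintype ι] [Nonempty ι]
    (n : ι → EuclideanSpace ℝ (Fin d)) (ν : ι → ℝ)
    (L : EuclideanSpace ℝ (Fin d) → ℝ)
    (hL : ∀ x, L x = ⨆ i, (⟪n i, x⟫ + ν i))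
    (ρ : EuclideanSpace ℝ (Fin d) → ℝ) (hρC1 : ContDiff ℝ 1 ρ)
    (hρ0 : ∀ z, 0 ≤ ρ z) (hρsupp : HasCompactSupport ρ) (hρ1 : ∫ z, ρ z = 1)
    (h : ℝ) (hh : 0 < h)
    (Lh : EuclideanSpace ℝ (Fin d) → ℝ)
    (hLh : ∀ x, Lh x = ∫ z, ρ z * L (x - h • z)) :
    Differentiable ℝ Lh ∧ ∀ x, gradient Lh x ∈ convexHull ℝ (Set.range n) := by
  obtain rfl : Lh = mollify volume ρ L h := funext hLh
  have hLc : Continuous L := by simpa only [← hL] using continuous_iSup_inner_add n ν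
  have hdiff := differentiable_mollify (μ := volume) hρC1 hρsupp hLc hh.ne'
  refine ⟨hdiff, fun x => mem_convexHull_range_of_inner_le_iSup fun v => ?_⟩
  rw [inner_gradient_left]
  exact fderiv_apply_le_of_add_smul_le (hdiff x) fun t ht =>
    mollify_add_le hρ0 hρ1 hρC1.continuous hρsupp hLc
      (fun y => by simpa only [hL] using iSup_inner_add_smul_le n ν y v ht.le) x
end
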